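/- arXiv:1610.09188 — 2 statements merged into one kernel-verified Lean document; each statement's English description precedes it below -/
import Mathlib

section
/- Suppose ‖A_π^μ v‖ ≤ λ‖v‖ for all v ∈ E with λ < 1, and suppose supp μ ⊆ S. Define P : Z¹(G,π) → Z¹(G,π) by P z = d_π b(z), where b(z) is the unique fixed point of L_{π,z}^μ. Then P is continuous with respect to the norm ‖·‖_S; more precisely, ‖P z‖_S ≤ 2 ‖z‖_S / (1 − λ) for every 1-cocycle z. -/
/-!
Since `μ` is carried by `S`, `‖z^μ‖ ≤ ‖z‖_S`; the fixed point `b = A b + z^μ` then satisfies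
`‖b‖ ≤ λ‖b‖ + ‖z‖_S`, i.e. `‖b‖ ≤ ‖z‖_S / (1 - λ)`, and `‖b - π_s b‖ ≤ 2‖b‖` as `π_s` is isometric.
-/

open MeasureTheory

/-- `z : G → E` is a (continuous) 1-cocycle for the representation `π`. -/
def IsCocycle {G E : Type*} [Group G] [TopologicalSpace G]
    [NormedAddCommGroup E] [NormedSpace ℝ E]
    (π : G → E →L[ℝ] E) (z : G → E) : Prop :=
  Continuous z ∧ ∀ g h : G, z (g * h) = z g + (π g) (z h)

/-- The coboundary `d_π v : G → E`, `(d_π v)(g) = v − π_g v`. -/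
def coboundary {G E : Type*} [NormedAddCommGroup E] [NormedSpace ℝ E]
    (π : G → E →L[ℝ] E) (v : E) : G → E :=
  fun g => v - (π g) v

/-- The norm `‖z‖_S = sup_{s ∈ S} ‖z_s‖`. -/
noncomputable def normS {G E : Type*} [NormedAddCommGroup E]
    (S : Set G) (z : G → E) : ℝ :=
  ⨆ s : S, ‖z (s : G)‖

section normS

variable {G E : Type*} [NormedAddCommGroup E]

lemma normS_nonneg (S : Set G) (z : G → E) : 0 ≤ normS S z :=
  Real.iSup_nonneg fun _ => norm_nonneg _

lemma normS_le {S : Set G} {z : G → E} {C : ℝ} (hC : 0 ≤ C) (h : ∀ s ∈ S, ‖z s‖ ≤ C) :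
    normS S z ≤ C :=
  Real.iSup_le (fun s => h s s.2) hC

lemma norm_le_normS [TopologicalSpace G] {S : Set G} (hS : IsCompact S) {z : G → E}
    (hz : ContinuousOn z S) {g : G} (hg : g ∈ S) : ‖z g‖ ≤ normS S z := by
  have hbdd : BddAbove (Set.range fun s : S => ‖z s‖) := by
    simpa only [Set.image_eq_range] using (hS.image_of_continuousOn hz.norm).bddAbove
  exact le_ciSup hbdd ⟨g, hg⟩

lemma norm_integral_le_normS [TopologicalSpace G] [MeasurableSpace G] [NormedSpace ℝ E]
    {S : Set G} (hS : IsCompact S) {z : G → E} (hz : ContinuousOn z S)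
    (μ : Measure G) [IsProbabilityMeasure μ] (hμS : μ Sᶜ = 0) :
    ‖∫ g, z g ∂μ‖ ≤ normS S z := by
  have hae : ∀ᵐ g ∂μ, ‖z g‖ ≤ normS S z := by
    filter_upwards [measure_eq_zero_iff_ae_notMem.mp hμS] with g hg
    exact norm_le_normS hS hz (not_not.mp hg)
  simpa using norm_integral_le_of_norm_le_const hae

end normS

lemma norm_le_of_eq_add_of_norm_le_mul {E : Type*} [SeminormedAddCommGroup E]
    {b a w : E} {lam : ℝ} (hlam : lam < 1) (hb : b = a + w) (ha : ‖a‖ ≤ lam * ‖b‖) :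
    ‖b‖ ≤ ‖w‖ / (1 - lam) := by
  have hnorm : ‖b‖ ≤ lam * ‖b‖ + ‖w‖ :=
    calc ‖b‖ = ‖a + w‖ := by rw [← hb]
      _ ≤ ‖a‖ + ‖w‖ := norm_add_le _ _
      _ ≤ lam * ‖b‖ + ‖w‖ := by gcongr
  rw [le_div_iff₀ (sub_pos.mpr hlam)]
  linarith

lemma norm_coboundary_le {G E : Type*} [NormedAddCommGroup E] [NormedSpace ℝ E]
    {π : G → E →L[ℝ] E} (hπ_isom : ∀ (g : G) (v : E), ‖(π g) v‖ = ‖v‖) (v : E) (g : G) :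
    ‖coboundary π v g‖ ≤ 2 * ‖v‖ :=
  calc ‖v - π g v‖ ≤ ‖v‖ + ‖π g v‖ := norm_sub_le _ _
    _ = 2 * ‖v‖ := by rw [hπ_isom]; ring

theorem stmt_9_general {G E : Type*} [Group G] [TopologicalSpace G]
    [MeasurableSpace G]
    [NormedAddCommGroup E] [NormedSpace ℝ E]
    (π : G → E →L[ℝ] E)
    (hπ_isom : ∀ (g : G) (v : E), ‖(π g) v‖ = ‖v‖)
    (S : Set G) (hS_comp : IsCompact S)
    (μ : Measure G) [IsProbabilityMeasure μ]
    (hμS : μ Sᶜ = 0)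
    (lam : ℝ) (hlam : lam < 1)
    (hcontr : ∀ v : E, ‖∫ g, (π g) v ∂μ‖ ≤ lam * ‖v‖) :
    ∀ z : G → E, IsCocycle π z →
      ∀ b : E, b = (∫ g, (π g) b ∂μ) + ∫ g, z g ∂μ →
        normS S (coboundary π b) ≤ 2 * normS S z / (1 - lam) := by
  intro z hz b hb
  have hzμ : ‖∫ g, z g ∂μ‖ ≤ normS S z :=
    norm_integral_le_normS hS_comp hz.1.continuousOn μ hμS
  have hbnorm : ‖b‖ ≤ normS S z / (1 - lam) :=
    (norm_le_of_eq_add_of_norm_le_mul hlam hb (hcontr b)).trans (by gcongr)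
  have hbound : 0 ≤ 2 * normS S z / (1 - lam) :=
    div_nonneg (by linarith [normS_nonneg S z]) (by linarith)
  refine normS_le hbound fun s _ => ?_
  calc ‖coboundary π b s‖ ≤ 2 * ‖b‖ := norm_coboundary_le hπ_isom b s
    _ ≤ 2 * normS S z / (1 - lam) := by rw [mul_div_assoc]; gcongr

/-- the projection `P z = d_π b(z)` is continuous: `‖P z‖_S ≤ 2‖z‖_S/(1−λ)`. -/
theorem stmt_9 {G E : Type*} [Group G] [TopologicalSpace G] [IsTopologicalGroup G]
    [MeasurableSpace G] [BorelSpace G]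
    [NormedAddCommGroup E] [NormedSpace ℝ E] [CompleteSpace E]
    (π : G → E →L[ℝ] E)
    (hπ_mul : ∀ g h : G, π (g * h) = (π g).comp (π h))
    (hπ_one : π 1 = ContinuousLinearMap.id ℝ E)
    (hπ_isom : ∀ (g : G) (v : E), ‖(π g) v‖ = ‖v‖)
    (hπ_cont : ∀ v : E, Continuous fun g => (π g) v)
    (S : Set G) (hS_comp : IsCompact S) (hS_symm : ∀ s ∈ S, s⁻¹ ∈ S)
    (hS_gen : Subgroup.closure S = ⊤)
    (μ : Measure G) [IsProbabilityMeasure μ]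
    (hμK : ∃ K : Set G, IsCompact K ∧ μ Kᶜ = 0)
    (hμS : μ Sᶜ = 0)
    (lam : ℝ) (hlam : lam < 1)
    (hcontr : ∀ v : E, ‖∫ g, (π g) v ∂μ‖ ≤ lam * ‖v‖) :
    ∀ z : G → E, IsCocycle π z →
      ∀ b : E, b = (∫ g, (π g) b ∂μ) + ∫ g, z g ∂μ →
        normS S (coboundary π b) ≤ 2 * normS S z / (1 - lam) :=
  stmt_9_general π hπ_isom S hS_comp μ hμS lam hlam hcontr
end

section
/- Suppose ‖A_π^μ v‖ ≤ λ‖v‖ for all v ∈ E with λ < 1, and suppose supp μ ⊆ S. Then the codifferential is bounded below: ‖d_π v‖_S ≥ (1 − λ)‖v‖ for every v ∈ E. In particular d_π is injective and its range B¹(G,π) is a closed subspace of (Z¹(G,π), ‖·‖_S). -/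
/-!
Averaging `v - π_g v` against `μ` gives `v - A_π^μ v`, whose norm is at least `(1 - λ)‖v‖`, and at
most `‖d_π v‖_S` because `μ` lives on `S`. Hence `v ↦ (d_π v)|_S` is an antilipschitz map from the
Banach space `E` into `C(S, E)`, so its range is closed: a cocycle that is approximated by
coboundaries on `S` coincides on `S` with a coboundary, and two cocycles agreeing on the
generating set `S` agree everywhere.
-/

open MeasureTheory

section CodifferentialBound

variable {G E : Type*} [NormedAddCommGroup E]

lemma normS_zero (S : Set G) : normS S (0 : G → E) = 0 := by
  simp [normS]

lemma le_normS {S : Set G} {f : G → E} (hf : BddAbove (Set.range fun s : S => ‖f s‖)) {s : G}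
    (hs : s ∈ S) : ‖f s‖ ≤ normS S f :=
  le_ciSup hf ⟨s, hs⟩

lemma ContinuousMap.norm_restrict_eq_normS [TopologicalSpace G] {S : Set G} [CompactSpace S]
    (f : C(G, E)) : ‖f.restrict S‖ = normS S f :=
  ContinuousMap.norm_eq_iSup_norm _

lemma Continuous.aestronglyMeasurable_of_measure_compl_eq_zero [TopologicalSpace G]
    [MeasurableSpace G] [OpensMeasurableSpace G] {μ : Measure G} {f : G → E} (hf : Continuous f)
    {K : Set G} (hK : IsCompact K) (hμK : μ Kᶜ = 0) : AEStronglyMeasurable f μ := by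
  borelize E
  refine aestronglyMeasurable_iff_aemeasurable_separable.2
    ⟨hf.measurable.aemeasurable, f '' K, (hK.image hf).isSeparable, ?_⟩
  filter_upwards [measure_eq_zero_iff_ae_notMem.1 hμK] with g hg
  exact Set.mem_image_of_mem f (by simpa using hg)

variable [NormedSpace ℝ E]

lemma norm_integral_le_normS_s10 [MeasurableSpace G] {μ : Measure G} [IsProbabilityMeasure μ]
    {S : Set G} (hμS : μ Sᶜ = 0) {f : G → E} (hf : BddAbove (Set.range fun s : S => ‖f s‖)) :
    ‖∫ g, f g ∂μ‖ ≤ normS S f := by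
  have hbound : ∀ᵐ g ∂μ, ‖f g‖ ≤ normS S f := by
    filter_upwards [measure_eq_zero_iff_ae_notMem.1 hμS] with g hg
    exact le_normS hf (by simpa using hg)
  simpa using norm_integral_le_of_norm_le_const hbound


section Coboundary

variable (π : G → E →L[ℝ] E)

lemma coboundary_sub (v w : E) : coboundary π (v - w) = coboundary π v - coboundary π w := by
  ext g
  simp only [coboundary, map_sub, Pi.sub_apply]
  abel

lemma norm_coboundary_apply_le (hπ_isom : ∀ (g : G) (v : E), ‖π g v‖ = ‖v‖) (v : E) (g : G) :
    ‖coboundary π v g‖ ≤ 2 * ‖v‖ :=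
  (norm_sub_le _ _).trans_eq (by rw [hπ_isom]; ring)

lemma normS_coboundary_le (hπ_isom : ∀ (g : G) (v : E), ‖π g v‖ = ‖v‖) (S : Set G) (v : E) :
    normS S (coboundary π v) ≤ 2 * ‖v‖ :=
  Real.iSup_le (fun s => norm_coboundary_apply_le π hπ_isom v s) (by positivity)

lemma bddAbove_norm_coboundary (hπ_isom : ∀ (g : G) (v : E), ‖π g v‖ = ‖v‖) (S : Set G) (v : E) :
    BddAbove (Set.range fun s : S => ‖coboundary π v s‖) :=
  ⟨2 * ‖v‖, by rintro _ ⟨s, rfl⟩; exact norm_coboundary_apply_le π hπ_isom v s⟩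

lemma coboundary_injective_of_bound {S : Set G} {c : ℝ} (hc : 0 < c)
    (hbound : ∀ v, c * ‖v‖ ≤ normS S (coboundary π v)) : Function.Injective (coboundary π) := by
  intro v w h
  have := hbound (v - w)
  rw [coboundary_sub, h, sub_self, normS_zero] at this
  exact sub_eq_zero.1 (norm_le_zero_iff.1 (nonpos_of_mul_nonpos_right this hc))

variable [TopologicalSpace G]

lemma continuous_coboundary (hπ_cont : ∀ v : E, Continuous fun g => π g v) (v : E) :
    Continuous (coboundary π v) :=
  continuous_const.sub (hπ_cont v)

theorem exists_eqOn_coboundary_of_forall_normS_lt [CompleteSpace E]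
    (hπ_isom : ∀ (g : G) (v : E), ‖π g v‖ = ‖v‖) (hπ_cont : ∀ v : E, Continuous fun g => π g v)
    {S : Set G} (hS : IsCompact S) {c : ℝ} (hc : 0 < c)
    (hbound : ∀ v, c * ‖v‖ ≤ normS S (coboundary π v)) {z : G → E} (hz : Continuous z)
    (happrox : ∀ ε > (0 : ℝ), ∃ v, normS S (z - coboundary π v) < ε) :
    ∃ w, Set.EqOn z (coboundary π w) S := by
  have := isCompact_iff_compactSpace.mp hS
  let Φ : E → C(S, E) := fun v =>
    (ContinuousMap.mk (coboundary π v) (continuous_coboundary π hπ_cont v)).restrict S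
  have hdist : ∀ v w, dist (Φ v) (Φ w) = normS S (coboundary π (v - w)) := fun v w => by
    rw [dist_eq_norm, coboundary_sub]
    exact ContinuousMap.norm_restrict_eq_normS ⟨_, (continuous_coboundary π hπ_cont v).sub
      (continuous_coboundary π hπ_cont w)⟩
  have hΦ_lip : LipschitzWith 2 Φ := LipschitzWith.of_dist_le_mul fun v w => by
    rw [hdist, dist_eq_norm]
    exact normS_coboundary_le π hπ_isom S _
  have hΦ_anti : AntilipschitzWith c.toNNReal⁻¹ Φ :=
    AntilipschitzWith.of_le_mul_dist fun v w => by
      rw [hdist, dist_eq_norm, NNReal.coe_inv, Real.coe_toNNReal _ hc.le, le_inv_mul_iff₀ hc]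
      exact hbound _
  have hz_mem : (ContinuousMap.mk z hz).restrict S ∈ closure (Set.range Φ) :=
    Metric.mem_closure_iff.2 fun ε hε => by
      obtain ⟨v, hv⟩ := happrox ε hε
      refine ⟨Φ v, ⟨v, rfl⟩, ?_⟩
      rw [dist_eq_norm]
      exact (ContinuousMap.norm_restrict_eq_normS
        ⟨_, hz.sub (continuous_coboundary π hπ_cont v)⟩).trans_lt hv
  rw [(hΦ_anti.isClosed_range hΦ_lip.uniformContinuous).closure_eq] at hz_mem
  obtain ⟨w, hw⟩ := hz_mem
  exact ⟨w, fun s hs => (DFunLike.congr_fun hw ⟨s, hs⟩).symm⟩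

variable [MeasurableSpace G] [OpensMeasurableSpace G] {μ : Measure G} [IsProbabilityMeasure μ]
  {S : Set G}

lemma integral_coboundary [CompleteSpace E] (hπ_isom : ∀ (g : G) (v : E), ‖π g v‖ = ‖v‖)
    (hπ_cont : ∀ v : E, Continuous fun g => π g v) (hS : IsCompact S) (hμS : μ Sᶜ = 0) (v : E) :
    ∫ g, coboundary π v g ∂μ = v - ∫ g, π g v ∂μ := by
  have hint : Integrable (fun g => π g v) μ :=
    .of_bound ((hπ_cont v).aestronglyMeasurable_of_measure_compl_eq_zero hS hμS) ‖v‖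
      (.of_forall fun g => (hπ_isom g v).le)
  simp [coboundary, integral_sub (integrable_const v) hint]

theorem one_sub_mul_norm_le_normS_coboundary [CompleteSpace E]
    (hπ_isom : ∀ (g : G) (v : E), ‖π g v‖ = ‖v‖) (hπ_cont : ∀ v : E, Continuous fun g => π g v)
    (hS : IsCompact S) (hμS : μ Sᶜ = 0) {lam : ℝ}
    (hcontr : ∀ v : E, ‖∫ g, π g v ∂μ‖ ≤ lam * ‖v‖) (v : E) :
    (1 - lam) * ‖v‖ ≤ normS S (coboundary π v) :=
  calc (1 - lam) * ‖v‖ ≤ ‖v‖ - ‖∫ g, π g v ∂μ‖ := by linarith [hcontr v]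
    _ ≤ ‖v - ∫ g, π g v ∂μ‖ := norm_sub_norm_le _ _
    _ = ‖∫ g, coboundary π v g ∂μ‖ := by rw [integral_coboundary π hπ_isom hπ_cont hS hμS]
    _ ≤ normS S (coboundary π v) :=
      norm_integral_le_normS_s10 hμS (bddAbove_norm_coboundary π hπ_isom S v)

end Coboundary

section Cocycle

variable [Group G] {π : G → E →L[ℝ] E}

lemma coboundary_mul (hπ_mul : ∀ g h : G, π (g * h) = (π g).comp (π h)) (v : E) (g h : G) :
    coboundary π v (g * h) = coboundary π v g + π g (coboundary π v h) := by
  simp only [coboundary, hπ_mul, ContinuousLinearMap.comp_apply, map_sub]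
  abel

lemma cocycle_apply_one (hπ_one : π 1 = ContinuousLinearMap.id ℝ E) {z : G → E}
    (hz : ∀ g h, z (g * h) = z g + π g (z h)) : z 1 = 0 := by
  simpa [hπ_one] using hz 1 1

lemma cocycle_apply_inv (hπ_one : π 1 = ContinuousLinearMap.id ℝ E) {z : G → E}
    (hz : ∀ g h, z (g * h) = z g + π g (z h)) (g : G) : z g⁻¹ = -π g⁻¹ (z g) := by
  have h := hz g⁻¹ g
  rw [inv_mul_cancel, cocycle_apply_one hπ_one hz] at h
  exact eq_neg_of_add_eq_zero_left h.symm

lemma cocycle_eq_of_eqOn_of_closure_eq_top (hπ_one : π 1 = ContinuousLinearMap.id ℝ E)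
    {z z' : G → E} (hz : ∀ g h, z (g * h) = z g + π g (z h))
    (hz' : ∀ g h, z' (g * h) = z' g + π g (z' h)) {S : Set G} (hS : Subgroup.closure S = ⊤)
    (h : Set.EqOn z z' S) : z = z' := by
  funext g
  induction (hS ▸ Subgroup.mem_top g : g ∈ Subgroup.closure S) using Subgroup.closure_induction with
  | mem g hg => exact h hg
  | one => rw [cocycle_apply_one hπ_one hz, cocycle_apply_one hπ_one hz']
  | mul g h _ _ hg hh => rw [hz, hz', hg, hh]
  | inv g _ hg => rw [cocycle_apply_inv hπ_one hz, cocycle_apply_inv hπ_one hz', hg]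

end Cocycle

end CodifferentialBound

theorem stmt_10_general {G E : Type*} [Group G] [TopologicalSpace G]
    [MeasurableSpace G] [BorelSpace G]
    [NormedAddCommGroup E] [NormedSpace ℝ E] [CompleteSpace E]
    (π : G → E →L[ℝ] E)
    (hπ_mul : ∀ g h : G, π (g * h) = (π g).comp (π h))
    (hπ_one : π 1 = ContinuousLinearMap.id ℝ E)
    (hπ_isom : ∀ (g : G) (v : E), ‖(π g) v‖ = ‖v‖)
    (hπ_cont : ∀ v : E, Continuous fun g => (π g) v)
    (S : Set G) (hS_comp : IsCompact S)
    (hS_gen : Subgroup.closure S = ⊤)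
    (μ : Measure G) [IsProbabilityMeasure μ]
    (hμS : μ Sᶜ = 0)
    (lam : ℝ) (hlam : lam < 1)
    (hcontr : ∀ v : E, ‖∫ g, (π g) v ∂μ‖ ≤ lam * ‖v‖) :
    (∀ v : E, (1 - lam) * ‖v‖ ≤ normS S (coboundary π v)) ∧
      (∀ v w : E, coboundary π v = coboundary π w → v = w) ∧
      (∀ z : G → E, IsCocycle π z →
        (∀ ε > (0 : ℝ), ∃ v : E, normS S (z - coboundary π v) < ε) →
        ∃ v : E, z = coboundary π v) := by
  have hbound := one_sub_mul_norm_le_normS_coboundary π hπ_isom hπ_cont hS_comp hμS hcontr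
  have hc : 0 < 1 - lam := sub_pos.2 hlam
  refine ⟨hbound, fun v w h => coboundary_injective_of_bound π hc hbound h, fun z hz happrox => ?_⟩
  obtain ⟨w, hw⟩ :=
    exists_eqOn_coboundary_of_forall_normS_lt π hπ_isom hπ_cont hS_comp hc hbound hz.1 happrox
  exact ⟨w, cocycle_eq_of_eqOn_of_closure_eq_top hπ_one hz.2 (coboundary_mul hπ_mul w) hS_gen hw⟩

/-- the codifferential is bounded below, `‖d_π v‖_S ≥ (1−λ)‖v‖`; in particular
`d_π` is injective and `B¹(G,π)` is closed in `(Z¹(G,π), ‖·‖_S)`. -/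
theorem stmt_10 {G E : Type*} [Group G] [TopologicalSpace G] [IsTopologicalGroup G]
    [MeasurableSpace G] [BorelSpace G]
    [NormedAddCommGroup E] [NormedSpace ℝ E] [CompleteSpace E]
    (π : G → E →L[ℝ] E)
    (hπ_mul : ∀ g h : G, π (g * h) = (π g).comp (π h))
    (hπ_one : π 1 = ContinuousLinearMap.id ℝ E)
    (hπ_isom : ∀ (g : G) (v : E), ‖(π g) v‖ = ‖v‖)
    (hπ_cont : ∀ v : E, Continuous fun g => (π g) v)
    (S : Set G) (hS_comp : IsCompact S) (hS_symm : ∀ s ∈ S, s⁻¹ ∈ S)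
    (hS_gen : Subgroup.closure S = ⊤)
    (μ : Measure G) [IsProbabilityMeasure μ]
    (hμK : ∃ K : Set G, IsCompact K ∧ μ Kᶜ = 0)
    (hμS : μ Sᶜ = 0)
    (lam : ℝ) (hlam : lam < 1)
    (hcontr : ∀ v : E, ‖∫ g, (π g) v ∂μ‖ ≤ lam * ‖v‖) :
    (∀ v : E, (1 - lam) * ‖v‖ ≤ normS S (coboundary π v)) ∧
      (∀ v w : E, coboundary π v = coboundary π w → v = w) ∧
      (∀ z : G → E, IsCocycle π z →
        (∀ ε > (0 : ℝ), ∃ v : E, normS S (z - coboundary π v) < ε) →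
        ∃ v : E, z = coboundary π v) :=
  stmt_10_general π hπ_mul hπ_one hπ_isom hπ_cont S hS_comp hS_gen μ hμS lam hlam hcontr
end
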